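/- Let r be a positive integer. Suppose there exist integers k1, k2 with l2 ∣ k1 and l1 ∣ (2k2 − k1 + r). Then there exists a group homomorphism Ψ : Γ(l1, l2) → GL_2(K)/μ_r over PGL_2(K); explicitly, Ψ may be taken to send the class of (α, A) ∈ Kˣ × GL_2(K) to the class of β·A for any β ∈ K with β^r = α^{k1}·det(A)^{k2}, this recipe being independent of all choices. -/

import Mathlib

/-! Over an algebraically closed field the `r`-th power map of `Kˣ` is onto with kernel `μ_r`,
so `α ↦ [α^{1/r} · I]` is a homomorphism `Kˣ → GL₂(K)/μ_r` with central image. Feeding it the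
character `(α, A) ↦ α^{k₁} det(A)^{k₂}` and multiplying by `[A]` gives a homomorphism
`Kˣ × GL₂(K) → GL₂(K)/μ_r` over `PGL₂(K)`. For `x₁ ∈ μ_{l₁}`, `x₂ ∈ μ_{l₂}` the character takes
the value `x₁^{-r}` on `i(x₁, x₂) = (x₂/x₁, x₁ I)`, since `x₂^{k₁} = 1` and `x₁^{2k₂-k₁+r} = 1`;
so `i(x₁, x₂)` is sent to `[x₁⁻¹ · x₁ I] = 1` and the homomorphism descends to `Γ(l₁, l₂)`. -/

noncomputable section

open Matrix

variable (K : Type*) [Field K]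

/-- The group homomorphism `Kˣ →* GL (Fin n) K` sending a unit of `K` to the corresponding
invertible scalar matrix. -/
def scalarHom (n : ℕ) : Kˣ →* GL (Fin n) K :=
  Units.map (algebraMap K (Matrix (Fin n) (Fin n) K)).toMonoidHom

theorem scalarHom_mem_center (n : ℕ) (ζ : Kˣ) :
    scalarHom K n ζ ∈ Subgroup.center (GL (Fin n) K) := by
  rw [Subgroup.mem_center_iff]
  intro g
  refine Units.ext ?_
  simp only [Units.val_mul, scalarHom, Units.coe_map, RingHom.toMonoidHom_eq_coe,
    MonoidHom.coe_coe]
  exact (Algebra.commutes (ζ : K) (g : Matrix (Fin n) (Fin n) K)).symm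

/-- `μ_d`: the central subgroup of `GL (Fin n) K` consisting of scalar matrices `ζ • 1`
with `ζ ^ d = 1`. -/
def muGL (n d : ℕ) : Subgroup (GL (Fin n) K) :=
  (rootsOfUnity d K).map (scalarHom K n)

theorem muGL_le_center (n d : ℕ) :
    muGL K n d ≤ Subgroup.center (GL (Fin n) K) := by
  rintro x ⟨ζ, -, rfl⟩
  exact scalarHom_mem_center K n ζ

instance muGL_normal (n d : ℕ) : (muGL K n d).Normal := by
  constructor
  intro x hx g
  have h := Subgroup.mem_center_iff.mp (muGL_le_center K n d hx) g
  have hg : g * x * g⁻¹ = x := by rw [h, mul_inv_cancel_right]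
  rwa [hg]

/-- The subgroup `Z = Kˣ·I` of all invertible scalar matrices in `GL (Fin n) K`. -/
def scalarSub (n : ℕ) : Subgroup (GL (Fin n) K) := (scalarHom K n).range

instance scalarSub_normal (n : ℕ) : (scalarSub K n).Normal := by
  constructor
  intro x hx g
  obtain ⟨ζ, rfl⟩ := hx
  have h := Subgroup.mem_center_iff.mp (scalarHom_mem_center K n ζ) g
  have hg : g * scalarHom K n ζ * g⁻¹ = scalarHom K n ζ := by rw [h, mul_inv_cancel_right]
  rw [hg]
  exact ⟨ζ, rfl⟩

/-- `PGL_n(K) = GL_n(K) / Z` where `Z` is the subgroup of invertible scalar matrices. -/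
abbrev PGL (n : ℕ) := GL (Fin n) K ⧸ scalarSub K n

theorem muGL_le_scalarSub (n d : ℕ) : muGL K n d ≤ scalarSub K n :=
  Subgroup.map_le_range _ _

/-- The natural projection `GL_n(K)/μ_d → PGL_n(K)`. -/
def projToPGL (n d : ℕ) : (GL (Fin n) K ⧸ muGL K n d) →* PGL K n :=
  QuotientGroup.map _ _ (MonoidHom.id _)
    (fun x hx => by simpa using muGL_le_scalarSub K n d hx)

/-- The embedding `i : Kˣ × Kˣ →* Kˣ × GL₂(K)`, `(x₁, x₂) ↦ (x₂/x₁, x₁·I₂)`. -/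
def iEmb : Kˣ × Kˣ →* Kˣ × GL (Fin 2) K :=
  ((MonoidHom.snd Kˣ Kˣ) * (MonoidHom.fst Kˣ Kˣ)⁻¹).prod
    ((scalarHom K 2).comp (MonoidHom.fst Kˣ Kˣ))

/-- The central subgroup `i(μ_a × μ_b)` of `Kˣ × GL₂(K)`. -/
def muGamma (a b : ℕ) : Subgroup (Kˣ × GL (Fin 2) K) :=
  ((rootsOfUnity a K).prod (rootsOfUnity b K)).map (iEmb K)

theorem muGamma_le_center (a b : ℕ) :
    muGamma K a b ≤ Subgroup.center (Kˣ × GL (Fin 2) K) := by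
  rintro x ⟨⟨x1, x2⟩, -, rfl⟩
  rw [Subgroup.mem_center_iff]
  intro g
  have h2 := Subgroup.mem_center_iff.mp (scalarHom_mem_center K 2 x1) g.2
  refine Prod.ext ?_ ?_
  · simpa [iEmb] using mul_comm g.1 (x2 * x1⁻¹)
  · simpa [iEmb] using h2

instance muGamma_normal (a b : ℕ) : (muGamma K a b).Normal := by
  constructor
  intro x hx g
  have h := Subgroup.mem_center_iff.mp (muGamma_le_center K a b hx) g
  have hg : g * x * g⁻¹ = x := by rw [h, mul_inv_cancel_right]
  rwa [hg]

/-- The group `Γ(a, b) = (Kˣ × GL₂(K)) / i(μ_a × μ_b)`. -/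
abbrev Gamma (a b : ℕ) := (Kˣ × GL (Fin 2) K) ⧸ muGamma K a b

/-- The homomorphism `Kˣ × GL₂(K) →* PGL₂(K)`, `(α, A) ↦ [A]`. -/
def sndPGL : (Kˣ × GL (Fin 2) K) →* PGL K 2 :=
  (QuotientGroup.mk' (scalarSub K 2)).comp (MonoidHom.snd Kˣ (GL (Fin 2) K))

theorem muGamma_le_ker (a b : ℕ) : muGamma K a b ≤ (sndPGL K).ker := by
  rintro x ⟨⟨x1, x2⟩, -, rfl⟩
  rw [MonoidHom.mem_ker]
  simp only [sndPGL, iEmb, MonoidHom.comp_apply, MonoidHom.prod_apply]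
  rw [QuotientGroup.mk'_apply, QuotientGroup.eq_one_iff]
  exact ⟨x1, rfl⟩

/-- The natural homomorphism `Γ(a, b) →* PGL₂(K)` descending `(α, A) ↦ [A]`. -/
def GammaToPGL (a b : ℕ) : Gamma K a b →* PGL K 2 :=
  QuotientGroup.lift (muGamma K a b) (sndPGL K)
    (fun _ hx => MonoidHom.mem_ker.mp (muGamma_le_ker K a b hx))

variable {K}

theorem rootsOfUnity_le_comap_muGL (n r : ℕ) :
    rootsOfUnity r K ≤ (muGL K n r).comap (scalarHom K n) :=
  Subgroup.le_comap_map _ _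

theorem det_scalarHom (n : ℕ) (x : Kˣ) : GeneralLinearGroup.det (scalarHom K n x) = x ^ n := by
  ext
  simp [scalarHom, GeneralLinearGroup.val_det_apply, Algebra.algebraMap_eq_smul_one]

def detCharacter (n : ℕ) (k1 k2 : ℤ) : Kˣ × GL (Fin n) K →* Kˣ :=
  (zpowGroupHom k1).comp (MonoidHom.fst _ _) *
    (zpowGroupHom k2).comp (GeneralLinearGroup.det.comp (MonoidHom.snd _ _))

theorem zpow_eq_one_of_pow_eq_one_of_dvd {G : Type*} [Group G] {x : G} {l : ℕ} {k : ℤ}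
    (hx : x ^ l = 1) (hk : (l : ℤ) ∣ k) : x ^ k = 1 :=
  orderOf_dvd_iff_zpow_eq_one.mp
    ((Int.natCast_dvd_natCast.mpr (orderOf_dvd_of_pow_eq_one hx)).trans hk)

theorem detCharacter_iEmb {l1 l2 r : ℕ} {k1 k2 : ℤ} (hk1 : (l2 : ℤ) ∣ k1)
    (hk2 : (l1 : ℤ) ∣ 2 * k2 - k1 + r) {x1 x2 : Kˣ} (hx1 : x1 ^ l1 = 1) (hx2 : x2 ^ l2 = 1) :
    detCharacter 2 k1 k2 (iEmb K (x1, x2)) = x1⁻¹ ^ r := by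
  have h2 : x2 ^ k1 = 1 := zpow_eq_one_of_pow_eq_one_of_dvd hx2 hk1
  have h1 : x1 ^ (2 * k2 - k1 + r) = 1 := zpow_eq_one_of_pow_eq_one_of_dvd hx1 hk2
  show (x2 * x1⁻¹) ^ k1 * GeneralLinearGroup.det (scalarHom K 2 x1) ^ k2 = x1⁻¹ ^ r
  calc (x2 * x1⁻¹) ^ k1 * GeneralLinearGroup.det (scalarHom K 2 x1) ^ k2
      = x2 ^ k1 * x1 ^ (2 * k2 - k1 + r) * x1⁻¹ ^ r := by
        rw [det_scalarHom, mul_zpow, mul_assoc, mul_assoc, ← zpow_natCast x1 2,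
          ← _root_.zpow_mul, ← zpow_natCast x1⁻¹ r, _root_.inv_zpow', _root_.inv_zpow',
          ← _root_.zpow_add, ← _root_.zpow_add]
        congr 2
        ring
    _ = x1⁻¹ ^ r := by rw [h1, h2, one_mul, one_mul]

theorem projToPGL_mk_scalarHom_mul {n r : ℕ} (β : Kˣ) (A : GL (Fin n) K) :
    projToPGL K n r (scalarHom K n β * A : GL (Fin n) K) = (A : PGL K n) := by
  have hβ : ((scalarHom K n β : GL (Fin n) K) : PGL K n) = 1 :=
    (QuotientGroup.eq_one_iff _).mpr ⟨β, rfl⟩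
  rw [projToPGL, QuotientGroup.map_mk, MonoidHom.id_apply, QuotientGroup.mk_mul, hβ, one_mul]

section RootScalar

variable [IsAlgClosed K] {r : ℕ}

theorem powMonoidHom_units_surjective (hr : 0 < r) :
    Function.Surjective (powMonoidHom r : Kˣ →* Kˣ) := by
  intro x
  obtain ⟨z, hz⟩ := IsAlgClosed.exists_pow_nat_eq (x : K) hr
  have hz0 : z ≠ 0 := by
    rintro rfl
    exact x.ne_zero (by rw [← hz, zero_pow hr.ne'])
  exact ⟨Units.mk0 z hz0, Units.ext hz⟩

/-- The `r`-th root, well defined modulo `μ_r = ker (β ↦ β ^ r)`. -/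
def rootModRootsOfUnity (hr : 0 < r) : Kˣ →* Kˣ ⧸ rootsOfUnity r K :=
  ((QuotientGroup.quotientMulEquivOfEq rootsOfUnity_eq_ker).trans
    (QuotientGroup.quotientKerEquivOfSurjective _
      (powMonoidHom_units_surjective hr))).symm.toMonoidHom

theorem rootModRootsOfUnity_pow (hr : 0 < r) (β : Kˣ) :
    rootModRootsOfUnity hr (β ^ r) = (β : Kˣ ⧸ rootsOfUnity r K) := by
  rw [rootModRootsOfUnity, MulEquiv.coe_toMonoidHom, MulEquiv.symm_apply_eq]
  rfl

variable (n : ℕ)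

/-- `α ↦ [α^{1/r} · I]`; its image is central, so it can be multiplied by `A ↦ [A]`. -/
def rootScalarHom (hr : 0 < r) : Kˣ →* GL (Fin n) K ⧸ muGL K n r :=
  (QuotientGroup.map (rootsOfUnity r K) (muGL K n r) (scalarHom K n)
    (rootsOfUnity_le_comap_muGL n r)).comp
    (rootModRootsOfUnity hr)

theorem rootScalarHom_pow (hr : 0 < r) (β : Kˣ) :
    rootScalarHom n hr (β ^ r) = (scalarHom K n β : GL (Fin n) K ⧸ muGL K n r) := by
  rw [rootScalarHom, MonoidHom.comp_apply, rootModRootsOfUnity_pow, QuotientGroup.map_mk]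

theorem commute_rootScalarHom (hr : 0 < r) (α : Kˣ) (A : GL (Fin n) K ⧸ muGL K n r) :
    Commute (rootScalarHom n hr α) A := by
  obtain ⟨β, rfl⟩ := powMonoidHom_units_surjective hr α
  induction A using QuotientGroup.induction_on with
  | H A =>
    rw [powMonoidHom_apply, rootScalarHom_pow]
    have hc : Commute (scalarHom K n β) A :=
      (Subgroup.mem_center_iff.mp (scalarHom_mem_center K n β) A).symm
    exact hc.map (QuotientGroup.mk' _)

def rootTwist (hr : 0 < r) : Kˣ × GL (Fin n) K →* GL (Fin n) K ⧸ muGL K n r :=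
  (rootScalarHom n hr).noncommCoprod (QuotientGroup.mk' _)
    (fun α _ => commute_rootScalarHom n hr α _)

theorem rootTwist_apply_of_pow_eq (hr : 0 < r) {α β : Kˣ} (hβ : β ^ r = α) (A : GL (Fin n) K) :
    rootTwist n hr (α, A) = (scalarHom K n β * A : GL (Fin n) K) := by
  rw [rootTwist, MonoidHom.noncommCoprod_apply, ← hβ, rootScalarHom_pow]
  rfl

/-- The lift of `Ψ` to `Kˣ × GL_n(K)`: `(α, A) ↦ [β · A]` with `β ^ r = α ^ k1 · det A ^ k2`. -/
def detTwist (hr : 0 < r) (k1 k2 : ℤ) : Kˣ × GL (Fin n) K →* GL (Fin n) K ⧸ muGL K n r :=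
  (rootTwist n hr).comp ((detCharacter n k1 k2).prod (MonoidHom.snd _ _))

theorem detTwist_apply_of_pow_eq (hr : 0 < r) {k1 k2 : ℤ} {α β : Kˣ} {A : GL (Fin n) K}
    (hβ : β ^ r = α ^ k1 * GeneralLinearGroup.det A ^ k2) :
    detTwist n hr k1 k2 (α, A) = (scalarHom K n β * A : GL (Fin n) K) :=
  rootTwist_apply_of_pow_eq n hr hβ A

theorem projToPGL_comp_detTwist (hr : 0 < r) (k1 k2 : ℤ) :
    (projToPGL K n r).comp (detTwist n hr k1 k2) =
      (QuotientGroup.mk' (scalarSub K n)).comp (MonoidHom.snd _ _) := by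
  ext ⟨α, A⟩
  obtain ⟨β, hβ⟩ := powMonoidHom_units_surjective hr (α ^ k1 * GeneralLinearGroup.det A ^ k2)
  rw [MonoidHom.comp_apply, detTwist_apply_of_pow_eq n hr hβ, projToPGL_mk_scalarHom_mul]
  rfl

theorem muGamma_le_ker_detTwist {l1 l2 : ℕ} (hr : 0 < r) {k1 k2 : ℤ} (hk1 : (l2 : ℤ) ∣ k1)
    (hk2 : (l1 : ℤ) ∣ 2 * k2 - k1 + r) : muGamma K l1 l2 ≤ (detTwist 2 hr k1 k2).ker := by
  rintro _ ⟨⟨x1, x2⟩, hx, rfl⟩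
  obtain ⟨hx1, hx2⟩ := Subgroup.mem_prod.mp hx
  have hβ := (detCharacter_iEmb hk1 hk2 hx1 hx2).symm
  rw [MonoidHom.mem_ker, detTwist, MonoidHom.comp_apply, MonoidHom.prod_apply,
    rootTwist_apply_of_pow_eq 2 hr hβ]
  show ((scalarHom K 2 x1⁻¹ * scalarHom K 2 x1 : GL (Fin 2) K) : GL (Fin 2) K ⧸ muGL K 2 r) = 1
  rw [← map_mul, inv_mul_cancel, map_one, QuotientGroup.mk_one]

end RootScalar

theorem exists_hom_Gamma_to_GLmod_over_PGL_general
    {K : Type*} [Field K] [IsAlgClosed K]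
    (l1 l2 : ℕ)
    (r : ℕ) (hr : 0 < r) (k1 k2 : ℤ)
    (hk1 : (l2 : ℤ) ∣ k1) (hk2 : (l1 : ℤ) ∣ (2 * k2 - k1 + (r : ℤ))) :
    ∃ Ψ : Gamma K l1 l2 →* (GL (Fin 2) K ⧸ muGL K 2 r),
      (projToPGL K 2 r).comp Ψ = GammaToPGL K l1 l2 ∧
      ∀ (α : Kˣ) (A : GL (Fin 2) K) (β : Kˣ),
        β ^ r = α ^ k1 * (Matrix.GeneralLinearGroup.det A) ^ k2 →
        Ψ (QuotientGroup.mk (α, A)) = QuotientGroup.mk (scalarHom K 2 β * A) := by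
  refine ⟨QuotientGroup.lift _ (detTwist 2 hr k1 k2) (muGamma_le_ker_detTwist hr hk1 hk2), ?_, ?_⟩
  · apply QuotientGroup.monoidHom_ext
    rw [MonoidHom.comp_assoc, QuotientGroup.lift_comp_mk', projToPGL_comp_detTwist]
    ext
    rfl
  · intro α A β hβ
    rw [QuotientGroup.lift_mk]
    exact detTwist_apply_of_pow_eq 2 hr hβ

/-- The construction underlying Theorem 4.9 and Remark 4.10: if `l₂ ∣ k₁` and
`l₁ ∣ (2k₂ − k₁ + r)` then there is a group homomorphism `Ψ : Γ(l₁, l₂) → GL₂(K)/μ_r` over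
`PGL₂(K)` sending the class of `(α, A)` to the class of `β·A` for any `β` with
`β^r = α^{k₁}·det(A)^{k₂}`. -/
theorem exists_hom_Gamma_to_GLmod_over_PGL
    {K : Type*} [Field K] [IsAlgClosed K]
    (d1 d2 l1 l2 : ℕ) (hd1 : 0 < d1) (hd2 : 0 < d2)
    (hl1 : (l1 : ℤ) = 2 * (d1 : ℤ) - (d2 : ℤ)) (hl2 : (l2 : ℤ) = 2 * (d2 : ℤ) - (d1 : ℤ))
    (hl1' : 4 ≤ l1) (hl2' : 4 ≤ l2)
    (hchar : ¬ (ringChar K ∣ 2 * l1 * l2))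
    (r : ℕ) (hr : 0 < r) (k1 k2 : ℤ)
    (hk1 : (l2 : ℤ) ∣ k1) (hk2 : (l1 : ℤ) ∣ (2 * k2 - k1 + (r : ℤ))) :
    ∃ Ψ : Gamma K l1 l2 →* (GL (Fin 2) K ⧸ muGL K 2 r),
      (projToPGL K 2 r).comp Ψ = GammaToPGL K l1 l2 ∧
      ∀ (α : Kˣ) (A : GL (Fin 2) K) (β : Kˣ),
        β ^ r = α ^ k1 * (Matrix.GeneralLinearGroup.det A) ^ k2 →
        Ψ (QuotientGroup.mk (α, A)) = QuotientGroup.mk (scalarHom K 2 β * A) :=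
  exists_hom_Gamma_to_GLmod_over_PGL_general l1 l2 r hr k1 k2 hk1 hk2

end
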